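/- For every $N \ge 1$, the probability under the uniform (Bernoulli(1/2,1/2)) measure on pairs $(c,d) \in \{1,2\}^N \times \{1,2\}^N$ that $\bar f_N(c,d) < 0.01$ is at most $e^{-rN}$ for some absolute constant $r > 0$, where $\bar f_N(c,d) = 1 - j/N$ and $j$ is the length of the longest common subsequence of $c$ and $d$. -/

import Mathlib

/-- The length of the longest common subsequence of two words `c d : Fin N → Fin 2`. -/
noncomputable def lcsLen {N : ℕ} (c d : Fin N → Fin 2) : ℕ :=
  sSup {j : ℕ | ∃ n m : Fin j → Fin N, StrictMono n ∧ StrictMono m ∧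
    ∀ i : Fin j, c (n i) = d (m i)}

/-!
If the longest common subsequence of `c` and `d` has length more than `0.99 N`, then some pair of
`k`-element position sets, `k = N - ⌊N / 100⌋`, is matched. Once the two position sets are fixed,
`d` is determined by `c` together with its `N - k` unmatched letters, so at most
`C(N, k)² 2^N 2^(N - k)` pairs qualify. Since `N - k ≤ N / 100` and `C(N, k) ≤ 129^N / 128^k`, this
is at most `3^N = e^(-N log (4/3)) 4^N`.
-/

section

variable {α : Type*} {M N k : ℕ}

def HasCommonSubseq (k : ℕ) (u : Fin M → α) (v : Fin N → α) : Prop :=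
  ∃ n : Fin k → Fin M, ∃ m : Fin k → Fin N, StrictMono n ∧ StrictMono m ∧ ∀ i, u (n i) = v (m i)

theorem HasCommonSubseq.le_length {u : Fin M → α} {v : Fin N → α} (h : HasCommonSubseq k u v) :
    k ≤ M := by
  obtain ⟨n, -, hn, -⟩ := h
  simpa using Fintype.card_le_of_injective n hn.injective

theorem HasCommonSubseq.mono {j : ℕ} {u : Fin M → α} {v : Fin N → α} (h : HasCommonSubseq k u v)
    (hj : j ≤ k) : HasCommonSubseq j u v := by
  obtain ⟨n, m, hn, hm, hnm⟩ := h
  exact ⟨n ∘ Fin.castLE hj, m ∘ Fin.castLE hj, hn.comp (Fin.strictMono_castLE hj),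
    hm.comp (Fin.strictMono_castLE hj), fun i => hnm _⟩

theorem hasCommonSubseq_of_le_lcsLen {c d : Fin N → Fin 2} (hk : k ≤ lcsLen c d) :
    HasCommonSubseq k c d :=
  (Nat.sSup_mem (s := {j | HasCommonSubseq j c d}) ⟨0, ⟨finZeroElim, finZeroElim,
    fun i => i.elim0, fun i => i.elim0, fun i => i.elim0⟩⟩
    ⟨N, fun _ h => h.le_length⟩).mono hk

theorem card_matching_le [Finite α] (n : Fin k → Fin M) {m : Fin k → Fin N}
    (hm : m.Injective) :
    Nat.card {p : (Fin M → α) × (Fin N → α) // ∀ i, p.1 (n i) = p.2 (m i)} ≤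
      Nat.card α ^ M * Nat.card α ^ (N - k) := by
  let restrict (p : {p : (Fin M → α) × (Fin N → α) // ∀ i, p.1 (n i) = p.2 (m i)}) :
      (Fin M → α) × (((Set.range m)ᶜ : Set (Fin N)) → α) := (p.1.1, fun x => p.1.2 x)
  have hinj : restrict.Injective := by
    rintro ⟨⟨c, d⟩, h⟩ ⟨⟨c', d'⟩, h'⟩ heq
    simp only [restrict, Prod.mk.injEq] at heq
    obtain ⟨rfl, hd⟩ := heq
    congr
    funext x
    by_cases hx : x ∈ Set.range m
    · obtain ⟨i, rfl⟩ := hx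
      exact (h i).symm.trans (h' i)
    · exact congrFun hd ⟨x, hx⟩
  calc _ ≤ Nat.card ((Fin M → α) × (((Set.range m)ᶜ : Set (Fin N)) → α)) :=
        Nat.card_le_card_of_injective _ hinj
    _ = _ := by
      rw [Nat.card_prod, Nat.card_fun, Nat.card_fun, Nat.card_fin, Nat.card_coe_set_eq,
        Set.ncard_compl, Set.ncard_range_of_injective hm]
      simp

open Set.powersetCard in
theorem card_hasCommonSubseq_le [Finite α] :
    Nat.card {p : (Fin M → α) × (Fin N → α) // HasCommonSubseq k p.1 p.2} ≤
      M.choose k * N.choose k * (Nat.card α ^ M * Nat.card α ^ (N - k)) := by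
  let Matching (S : Set.powersetCard (Fin M) k × Set.powersetCard (Fin N) k) :=
    {p : (Fin M → α) × (Fin N → α) //
      ∀ i, p.1 (ofFinEmbEquiv.symm S.1 i) = p.2 (ofFinEmbEquiv.symm S.2 i)}
  let forget (x : Σ S, Matching S) :
      {p : (Fin M → α) × (Fin N → α) // HasCommonSubseq k p.1 p.2} :=
    ⟨x.2.1, _, _, (ofFinEmbEquiv.symm x.1.1).strictMono, (ofFinEmbEquiv.symm x.1.2).strictMono,
      x.2.2⟩
  have hforget : forget.Surjective := by
    rintro ⟨p, n, m, hn, hm, h⟩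
    refine ⟨⟨(ofFinEmbEquiv (.ofStrictMono n hn), ofFinEmbEquiv (.ofStrictMono m hm)), p, ?_⟩, rfl⟩
    simpa using h
  calc _ ≤ Nat.card (Σ S, Matching S) := Nat.card_le_card_of_surjective _ hforget
    _ = ∑ S, Nat.card (Matching S) := Nat.card_sigma
    _ ≤ ∑ _S, Nat.card α ^ M * Nat.card α ^ (N - k) :=
      Finset.sum_le_sum fun S _ => card_matching_le _ (ofFinEmbEquiv.symm S.2).injective
    _ = _ := by
      rw [Finset.sum_const, Finset.card_univ, ← Nat.card_eq_fintype_card, Nat.card_prod,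
        Set.powersetCard.card, Set.powersetCard.card, Nat.card_fin, Nat.card_fin, smul_eq_mul]

theorem Nat.choose_mul_pow_le_succ_pow (n j a : ℕ) : n.choose j * a ^ j ≤ (a + 1) ^ n := by
  rcases le_or_gt j n with hj | hj
  · calc n.choose j * a ^ j = a ^ j * 1 ^ (n - j) * n.choose j := by ring
      _ ≤ ∑ i ∈ Finset.range (n + 1), a ^ i * 1 ^ (n - i) * n.choose i :=
        Finset.single_le_sum (f := fun i => a ^ i * 1 ^ (n - i) * n.choose i)
          (fun _ _ => Nat.zero_le _) (Finset.mem_range_succ_iff.2 hj)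
      _ = (a + 1) ^ n := (add_pow a 1 n).symm
  · simp [Nat.choose_eq_zero_of_lt hj]

theorem choose_sq_mul_two_pow_le_three_pow (hk : 100 * (N - k) ≤ N) :
    N.choose k ^ 2 * (2 ^ N * 2 ^ (N - k)) ≤ 3 ^ N := by
  obtain hNk | hkN := lt_or_ge N k
  · simp [Nat.choose_eq_zero_of_lt hNk]
  obtain ⟨m, rfl⟩ := Nat.exists_eq_add_of_le hkN
  rw [Nat.add_sub_cancel_left] at hk ⊢
  have hC : (k + m).choose k * 2 ^ (7 * k) ≤ (2 ^ 7 + 1) ^ (k + m) := by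
    simpa only [pow_mul] using Nat.choose_mul_pow_le_succ_pow (k + m) k (2 ^ 7)
  have hnum : (129 ^ 200 * 2 ^ 115) ^ (k + m) ≤ (3 ^ 100 * (2 ^ 200) ^ 7) ^ (k + m) :=
    Nat.pow_le_pow_left (by norm_num) _
  simp only [mul_pow, ← pow_mul] at hnum
  -- raising to the 100th power lets `100 * m ≤ k + m` act on integer exponents
  refine (Nat.pow_le_pow_iff_left (by norm_num : 100 ≠ 0)).1 <|
    Nat.le_of_mul_le_mul_right (c := 2 ^ (1400 * (k + m))) ?_ (by positivity)
  calc ((k + m).choose k ^ 2 * (2 ^ (k + m) * 2 ^ m)) ^ 100 * 2 ^ (1400 * (k + m))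
      = ((k + m).choose k * 2 ^ (7 * k)) ^ 200 * (2 ^ (100 * (k + m)) * 2 ^ (1500 * m)) := by
        ring
    _ ≤ ((2 ^ 7 + 1) ^ (k + m)) ^ 200 * (2 ^ (100 * (k + m)) * 2 ^ (15 * (k + m))) := by
        gcongr ?_ ^ 200 * (_ * 2 ^ ?_)
        · norm_num
        · omega
    _ = 129 ^ (200 * (k + m)) * 2 ^ (115 * (k + m)) := by ring
    _ ≤ 3 ^ (100 * (k + m)) * 2 ^ (200 * 7 * (k + m)) := hnum
    _ = (3 ^ (k + m)) ^ 100 * 2 ^ (1400 * (k + m)) := by ring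

end

/-- There is an absolute constant `r > 0` such that for every `N ≥ 1`, the
probability under the uniform measure on pairs of binary words of length `N` that
`f̄_N (c,d) = 1 - lcsLen c d / N < 0.01` is at most `e^{-rN}`. -/
theorem stmt_8 : ∃ r : ℝ, 0 < r ∧ ∀ N : ℕ, 1 ≤ N →
    (Nat.card {p : (Fin N → Fin 2) × (Fin N → Fin 2) //
        1 - (lcsLen p.1 p.2 : ℝ) / N < 0.01} : ℝ)
      ≤ Real.exp (-r * N) * 2 ^ (2 * N) := by
  refine ⟨Real.log (4 / 3), Real.log_pos (by norm_num), fun N hN => ?_⟩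
  have hexp : Real.exp (-Real.log (4 / 3) * N) * 2 ^ (2 * N) = 3 ^ N := by
    rw [neg_mul, Real.exp_neg, mul_comm (Real.log _), Real.exp_nat_mul,
      Real.exp_log (by norm_num), pow_mul, ← inv_pow, ← mul_pow]
    norm_num
  have hlcs (p : (Fin N → Fin 2) × (Fin N → Fin 2)) (hp : 1 - (lcsLen p.1 p.2 : ℝ) / N < 0.01) :
      99 * N < 100 * lcsLen p.1 p.2 := by
    rw [sub_lt_comm, lt_div_iff₀ (by exact_mod_cast hN)] at hp
    exact_mod_cast (by linarith : (99 * N : ℝ) < 100 * lcsLen p.1 p.2)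
  have hsub : {p : (Fin N → Fin 2) × (Fin N → Fin 2) | 1 - (lcsLen p.1 p.2 : ℝ) / N < 0.01} ⊆
      {p | HasCommonSubseq (N - N / 100) p.1 p.2} := fun p hp =>
    hasCommonSubseq_of_le_lcsLen (by have := hlcs p hp; omega)
  have hcount : Nat.card {p : (Fin N → Fin 2) × (Fin N → Fin 2) //
      1 - (lcsLen p.1 p.2 : ℝ) / N < 0.01} ≤ 3 ^ N := by
    refine (Nat.card_mono (Set.toFinite _) hsub).trans <|
      card_hasCommonSubseq_le.trans ?_
    rw [Nat.card_fin, ← sq]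
    exact choose_sq_mul_two_pow_le_three_pow (by omega)
  rw [hexp]
  exact_mod_cast hcount
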